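/- For all n ≥ 0 and h ≥ 0, the number of Motzkin paths of length n with height exactly h that have no horizontal step at level h equals S(n, 2h+2) − S(n, 2h+3), where for a ≥ 1, S(n, a) := ∑_{k≥1} [ T(n, n+2−k·a) − 2·T(n, n−k·a) + T(n, n−2−k·a) ] (a finite sum, since T(n, j) = 0 for j < 0). -/

import Mathlib

open Finset
open scoped Classical

/-- A step: `+1`, `-1` or `0`. -/
abbrev Step : Type := ({1, -1, 0} : Finset ℤ)

/-- Partial sum of the first `k` steps. -/
def psum {n : ℕ} (w : Fin n → Step) (k : ℕ) : ℤ :=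
  ∑ i : Fin n, if (i : ℕ) < k then (w i : ℤ) else 0

/-- `w` is a Motzkin path: all partial sums are nonnegative and the total sum is `0`. -/
def IsMotzkin {n : ℕ} (w : Fin n → Step) : Prop :=
  (∀ k ∈ Finset.range (n + 1), 0 ≤ psum w k) ∧ psum w n = 0

/-- The height of a path: the maximum of its partial sums (`0` for the empty path). -/
def height {n : ℕ} (w : Fin n → Step) : ℤ :=
  (Finset.range (n + 1)).sup' (Finset.nonempty_range_iff.mpr (Nat.succ_ne_zero n)) (psum w)

/-- `w` has a horizontal step at level `j`: some step is `0` and the partial sum up to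
and including that step equals `j`. -/
def HasHorizAt {n : ℕ} (w : Fin n → Step) (j : ℤ) : Prop :=
  ∃ i : Fin n, (w i : ℤ) = 0 ∧ psum w ((i : ℕ) + 1) = j

/-- The trinomial coefficient `T n k`: the coefficient of `t^k` in `(1 + t + t^2)^n`,
extended by `0` for negative `k`. -/
noncomputable def T (n : ℕ) (k : ℤ) : ℤ :=
  if 0 ≤ k then ((1 + Polynomial.X + Polynomial.X ^ 2 : Polynomial ℤ) ^ n).coeff k.toNat
  else 0

/-- `S n a = ∑_{k ≥ 1} (T n (n+2-k·a) - 2 T n (n-k·a) + T n (n-2-k·a))`; for `a ≥ 1`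
all terms with `k > n + 2` vanish, so the sum may be truncated there. -/
noncomputable def S (n a : ℕ) : ℤ :=
  ∑ k ∈ Finset.Icc 1 (n + 2),
    (T n ((n : ℤ) + 2 - k * a) - 2 * T n ((n : ℤ) - k * a) + T n ((n : ℤ) - 2 - k * a))

/-!
Count step sequences by their endpoint: let `G(n, a, j)` be the number of sequences of length
`n` ending in the residue class of `j` modulo `a`, and `F(n, a, j) = G(n, a, j) - G(n, a, -2 - j)`
(reflection in the level `-1`). `F` obeys the one-step recurrence
`F(n+1, j) = F(n, j-1) + F(n, j) + F(n, j+1)`, and `F(n, a, j') = -F(n, a, j)` whenever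
`a ∣ j + j' + 2`. For `a = 2H + 4` it hence vanishes at `-1` and at `H + 1`, so it counts paths
confined to `[0, H]`. For `a = 2H + 3` it satisfies `F(H + 1) = -F(H)`, which turns the
recurrence at level `H` into `F(n+1, H) = F(n, H-1)`: the rule for paths in `[0, H]` that take
no flat step at `H`. The paths to be counted are those of the second kind ending at `0`, minus the
paths in `[0, h - 1]` ending at `0`; expanding `G` into trinomial coefficients, which count
sequences by their exact endpoint, gives `S(n, 2h+2) - S(n, 2h+3)`.
-/

section Paths

variable {n : ℕ}

lemma step_cases (s : Step) : (s : ℤ) = 1 ∨ (s : ℤ) = -1 ∨ (s : ℤ) = 0 := by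
  simpa only [mem_insert, mem_singleton] using s.2

lemma sum_step {M : Type*} [AddCommMonoid M] (f : ℤ → M) :
    ∑ s : Step, f s = f 1 + f (-1) + f 0 := by
  rw [Finset.sum_coe_sort ({1, -1, 0} : Finset ℤ) f, sum_insert (by decide),
    sum_insert (by decide), sum_singleton, add_assoc]

lemma psum_zero (w : Fin n → Step) : psum w 0 = 0 := by
  simp [psum]

lemma psum_of_le {k : ℕ} (w : Fin n → Step) (hk : n ≤ k) :
    psum w k = ∑ i, (w i : ℤ) :=
  sum_congr rfl fun i _ => if_pos (i.2.trans_le hk)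

lemma abs_psum_le (w : Fin n → Step) : |psum w n| ≤ n := by
  rw [psum_of_le w le_rfl]
  calc |∑ i, (w i : ℤ)| ≤ ∑ i, |(w i : ℤ)| := abs_sum_le_sum_abs _ _
    _ ≤ ∑ _i : Fin n, 1 := sum_le_sum fun i _ => by
        rcases step_cases (w i) with h | h | h <;> simp [h]
    _ = n := by simp

lemma psum_snoc_of_le (w : Fin n → Step) (s : Step) {k : ℕ} (hk : k ≤ n) :
    psum (Fin.snoc w s) k = psum w k := by
  simp only [psum, Fin.sum_univ_castSucc, Fin.snoc_castSucc, Fin.val_castSucc, Fin.val_last,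
    if_neg (not_lt.2 hk), add_zero]

lemma psum_snoc_succ (w : Fin n → Step) (s : Step) :
    psum (Fin.snoc w s) (n + 1) = psum w n + s := by
  rw [psum_of_le _ le_rfl, psum_of_le _ le_rfl, Fin.sum_univ_castSucc]
  simp only [Fin.snoc_castSucc, Fin.snoc_last]

def negStep (s : Step) : Step :=
  ⟨-s, by rcases step_cases s with h | h | h <;> simp [h]⟩

lemma psum_negStep (w : Fin n → Step) (k : ℕ) :
    psum (fun i => negStep (w i)) k = -psum w k := by
  simp only [psum, negStep, ← sum_neg_distrib, apply_ite Neg.neg, neg_zero]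

end Paths

noncomputable def numPaths (n : ℕ) (P : (Fin n → Step) → Prop) : ℤ :=
  (univ.filter P).card

section Counting

variable {n : ℕ} {P Q : (Fin n → Step) → Prop}

lemma numPaths_eq_sum (P : (Fin n → Step) → Prop) :
    numPaths n P = ∑ w, if P w then 1 else 0 :=
  natCast_card_filter _ _

lemma numPaths_eq_card (P : (Fin n → Step) → Prop) [DecidablePred P] :
    numPaths n P = (univ.filter P).card := by
  unfold numPaths
  congr!

lemma numPaths_congr (h : ∀ w, P w ↔ Q w) : numPaths n P = numPaths n Q := by
  simp only [numPaths, h]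

lemma numPaths_eq_zero (h : ∀ w, ¬ P w) : numPaths n P = 0 := by
  simp [numPaths, filter_false_of_mem fun w _ => h w]

lemma numPaths_zero (P : (Fin 0 → Step) → Prop) :
    numPaths 0 P = if P default then 1 else 0 := by
  rw [numPaths_eq_sum, Fintype.sum_unique]

lemma numPaths_succ (P : (Fin (n + 1) → Step) → Prop) :
    numPaths (n + 1) P = ∑ s : Step, numPaths n fun w => P (Fin.snoc w s) := by
  simp only [numPaths_eq_sum]
  rw [← Fintype.sum_equiv (Fin.snocEquiv fun _ => Step) _ _ fun _ => rfl, Fintype.sum_prod_type]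
  rfl

lemma numPaths_and_not (h : ∀ w, Q w → P w) :
    numPaths n (fun w => P w ∧ ¬ Q w) = numPaths n P - numPaths n Q := by
  have hsub : univ.filter Q ⊆ univ.filter P := monotone_filter_right _ fun w _ => h w
  rw [numPaths, numPaths, numPaths, ← Nat.cast_sub (card_le_card hsub),
    ← card_sdiff_of_subset hsub]
  congr 2
  ext w
  simp

lemma numPaths_eq_sum_fiberwise {ι : Type*} (f : (Fin n → Step) → ι) (K : Finset ι)
    (hK : ∀ w, P w → f w ∈ K) :
    numPaths n P = ∑ k ∈ K, numPaths n fun w => P w ∧ f w = k := by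
  rw [numPaths, card_eq_sum_card_fiberwise fun w hw => hK w (mem_filter.1 hw).2]
  push_cast
  simp only [numPaths, filter_filter]
  congr!

end Counting

def InStrip {n : ℕ} (H : ℤ) (w : Fin n → Step) : Prop :=
  ∀ k ≤ n, 0 ≤ psum w k ∧ psum w k ≤ H

section Strip

variable {n : ℕ} {H j : ℤ}

lemma inStrip_snoc (w : Fin n → Step) (s : Step) :
    InStrip H (Fin.snoc w s) ↔ InStrip H w ∧ 0 ≤ psum w n + s ∧ psum w n + s ≤ H := by
  constructor
  · intro hs
    refine ⟨fun k hk => psum_snoc_of_le w s hk ▸ hs k (hk.trans n.le_succ), ?_⟩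
    simpa only [psum_snoc_succ] using hs (n + 1) le_rfl
  · rintro ⟨hw, htop⟩ k hk
    rcases hk.lt_or_eq with hk | rfl
    · exact psum_snoc_of_le w s (Nat.lt_succ_iff.1 hk) ▸ hw k (Nat.lt_succ_iff.1 hk)
    · rwa [psum_snoc_succ]

lemma hasHorizAt_snoc (w : Fin n → Step) (s : Step) :
    HasHorizAt (Fin.snoc w s) j ↔ HasHorizAt w j ∨ ((s : ℤ) = 0 ∧ psum w n = j) := by
  simp only [HasHorizAt, Fin.exists_fin_succ', Fin.snoc_castSucc, Fin.snoc_last, Fin.val_castSucc,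
    Fin.val_last, psum_snoc_succ]
  refine or_congr (exists_congr fun i => ?_) (and_congr_right fun hs => by rw [hs, add_zero])
  rw [psum_snoc_of_le w s i.2]

lemma InStrip.le_of_hasHorizAt {w : Fin n → Step} (hw : InStrip H w) (hj : HasHorizAt w j) :
    j ≤ H := by
  obtain ⟨i, -, rfl⟩ := hj
  exact (hw _ i.2).2

lemma isMotzkin_and_height_le_iff (w : Fin n → Step) :
    IsMotzkin w ∧ height w ≤ H ↔ InStrip H w ∧ psum w n = 0 := by
  simp only [IsMotzkin, height, sup'_le_iff, mem_range, Nat.lt_succ_iff, InStrip]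
  constructor
  · rintro ⟨⟨hnonneg, htotal⟩, hle⟩
    exact ⟨fun k hk => ⟨hnonneg k hk, hle k hk⟩, htotal⟩
  · rintro ⟨hw, htotal⟩
    exact ⟨⟨fun k hk => (hw k hk).1, htotal⟩, fun k hk => (hw k hk).2⟩

end Strip

noncomputable def stripCount (n : ℕ) (H j : ℤ) : ℤ :=
  numPaths n fun w => InStrip H w ∧ psum w n = j

noncomputable def stripCountNoFlatTop (n : ℕ) (H j : ℤ) : ℤ :=
  numPaths n fun w => InStrip H w ∧ psum w n = j ∧ ¬ HasHorizAt w H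

section StripCount

variable {n : ℕ} {H j : ℤ}

lemma stripCount_eq_zero (hj : j < 0 ∨ H < j) : stripCount n H j = 0 :=
  numPaths_eq_zero fun w ⟨hw, hend⟩ => by have := hw n le_rfl; omega

lemma stripCountNoFlatTop_eq_zero (hj : j < 0 ∨ H < j) : stripCountNoFlatTop n H j = 0 :=
  numPaths_eq_zero fun w ⟨hw, hend, _⟩ => by have := hw n le_rfl; omega

lemma stripCount_zero (hH : 0 ≤ H) : stripCount 0 H j = if j = 0 then 1 else 0 := by
  have hstrip : InStrip H (default : Fin 0 → Step) := fun k hk => by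
    rw [Nat.le_zero.1 hk, psum_zero]
    exact ⟨le_rfl, hH⟩
  simp [stripCount, numPaths_zero, hstrip, psum_zero, eq_comm]

lemma stripCountNoFlatTop_zero (hH : 0 ≤ H) :
    stripCountNoFlatTop 0 H j = if j = 0 then 1 else 0 := by
  rw [← stripCount_zero hH]
  exact numPaths_congr fun w => and_congr_right fun _ => and_iff_left fun ⟨i, _⟩ => i.elim0

lemma stripCount_succ (h0 : 0 ≤ j) (hjH : j ≤ H) :
    stripCount (n + 1) H j =
      stripCount n H (j - 1) + stripCount n H (j + 1) + stripCount n H j := by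
  have hlast (s : Step) : (numPaths n fun w =>
      InStrip H (Fin.snoc w s) ∧ psum (Fin.snoc w s) (n + 1) = j) = stripCount n H (j - s) :=
    numPaths_congr fun w => by
      rw [inStrip_snoc, psum_snoc_succ]
      constructor
      · rintro ⟨⟨hw, -⟩, hend⟩
        exact ⟨hw, by omega⟩
      · rintro ⟨hw, hend⟩
        exact ⟨⟨hw, by omega, by omega⟩, by omega⟩
  rw [stripCount, numPaths_succ, sum_congr rfl fun s _ => hlast s,
    sum_step fun x => stripCount n H (j - x), sub_neg_eq_add, sub_zero]

lemma stripCountNoFlatTop_succ (h0 : 0 ≤ j) (hjH : j ≤ H) :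
    stripCountNoFlatTop (n + 1) H j = stripCountNoFlatTop n H (j - 1) +
      stripCountNoFlatTop n H (j + 1) + if j = H then 0 else stripCountNoFlatTop n H j := by
  have hlast (s : Step) : (numPaths n fun w => InStrip H (Fin.snoc w s) ∧
      psum (Fin.snoc w s) (n + 1) = j ∧ ¬ HasHorizAt (Fin.snoc w s) H) =
      if (s : ℤ) = 0 ∧ j = H then 0 else stripCountNoFlatTop n H (j - s) := by
    split_ifs with hflat
    · refine numPaths_eq_zero fun w ⟨_, hend, hno⟩ => hno ?_
      rw [psum_snoc_succ] at hend
      exact (hasHorizAt_snoc w s).2 (Or.inr ⟨hflat.1, by omega⟩)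
    · refine numPaths_congr fun w => ?_
      rw [inStrip_snoc, psum_snoc_succ, hasHorizAt_snoc]
      constructor
      · rintro ⟨⟨hw, -⟩, hend, hno⟩
        exact ⟨hw, by omega, fun hh => hno (Or.inl hh)⟩
      · rintro ⟨hw, hend, hno⟩
        refine ⟨⟨hw, by omega, by omega⟩, by omega, ?_⟩
        rintro (hh | ⟨hs, htop⟩)
        exacts [hno hh, hflat ⟨hs, by omega⟩]
  rw [stripCountNoFlatTop, numPaths_succ, sum_congr rfl fun s _ => hlast s,
    sum_step fun x => if x = 0 ∧ j = H then 0 else stripCountNoFlatTop n H (j - x)]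
  simp only [one_ne_zero, neg_eq_zero, false_and, if_false, true_and, sub_neg_eq_add, sub_zero]

end StripCount

lemma numPaths_isMotzkin_height_eq (n : ℕ) (h : ℤ) :
    numPaths n (fun w => IsMotzkin w ∧ height w = h ∧ ¬ HasHorizAt w h) =
      stripCountNoFlatTop n h 0 - stripCount n (h - 1) 0 := by
  have hlower (w : Fin n → Step) (hw : InStrip (h - 1) w ∧ psum w n = 0) :
      InStrip h w ∧ psum w n = 0 ∧ ¬ HasHorizAt w h :=
    ⟨fun k hk => ⟨(hw.1 k hk).1, by linarith [(hw.1 k hk).2]⟩, hw.2,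
      fun hflat => by linarith [hw.1.le_of_hasHorizAt hflat]⟩
  rw [stripCountNoFlatTop, stripCount, ← numPaths_and_not hlower]
  refine numPaths_congr fun w => ?_
  have hP := isMotzkin_and_height_le_iff (H := h) w
  have hQ := isMotzkin_and_height_le_iff (H := h - 1) w
  constructor
  · rintro ⟨hM, hht, hflat⟩
    obtain ⟨hs, hend⟩ := hP.1 ⟨hM, hht.le⟩
    exact ⟨⟨hs, hend, hflat⟩, fun hq => by have := (hQ.2 hq).2; omega⟩
  · rintro ⟨⟨hs, hend, hflat⟩, hnot⟩
    obtain ⟨hM, hle⟩ := hP.2 ⟨hs, hend⟩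
    exact ⟨hM, le_antisymm hle (not_lt.1 fun hlt => hnot (hQ.1 ⟨hM, by omega⟩)), hflat⟩

noncomputable def endCount (n : ℕ) (j : ℤ) : ℤ :=
  numPaths n fun w => psum w n = j

noncomputable def modCount (n : ℕ) (a j : ℤ) : ℤ :=
  numPaths n fun w => psum w n ≡ j [ZMOD a]

noncomputable def reflCount (n : ℕ) (a j : ℤ) : ℤ :=
  modCount n a j - modCount n a (-2 - j)

section Count

variable {n : ℕ} {a j j' : ℤ}

lemma endCount_zero : endCount 0 j = if j = 0 then 1 else 0 := by
  simp [endCount, numPaths_zero, psum_zero, eq_comm]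

lemma endCount_succ :
    endCount (n + 1) j = endCount n (j - 1) + endCount n (j + 1) + endCount n j := by
  have hlast (s : Step) : (numPaths n fun w => psum (Fin.snoc w s) (n + 1) = j) =
      endCount n (j - s) :=
    numPaths_congr fun w => by rw [psum_snoc_succ, eq_sub_iff_add_eq]
  rw [endCount, numPaths_succ, sum_congr rfl fun s _ => hlast s,
    sum_step fun x => endCount n (j - x), sub_neg_eq_add, sub_zero]

lemma endCount_neg : endCount n (-j) = endCount n j := by
  unfold endCount numPaths
  congr 1
  have hneg (w : Fin n → Step) : (fun i => negStep (negStep (w i))) = w :=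
    funext fun i => Subtype.ext (neg_neg _)
  refine card_nbij' (fun w i => negStep (w i)) (fun w i => negStep (w i))
    (fun w hw => ?_) (fun w hw => ?_) (fun w _ => hneg w) (fun w _ => hneg w) <;>
  simpa [psum_negStep, neg_eq_iff_eq_neg] using hw

lemma modCount_congr (h : j ≡ j' [ZMOD a]) : modCount n a j = modCount n a j' :=
  numPaths_congr fun _ => ⟨fun hw => hw.trans h, fun hw => hw.trans h.symm⟩

lemma modCount_zero : modCount 0 a j = if 0 ≡ j [ZMOD a] then 1 else 0 := by
  simp [modCount, numPaths_zero, psum_zero]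

lemma modCount_succ :
    modCount (n + 1) a j = modCount n a (j - 1) + modCount n a (j + 1) + modCount n a j := by
  have hlast (s : Step) : (numPaths n fun w => psum (Fin.snoc w s) (n + 1) ≡ j [ZMOD a]) =
      modCount n a (j - s) :=
    numPaths_congr fun w => by
      rw [psum_snoc_succ, Int.modEq_iff_dvd, Int.modEq_iff_dvd, sub_sub, add_comm (s : ℤ)]
  rw [modCount, numPaths_succ, sum_congr rfl fun s _ => hlast s,
    sum_step fun x => modCount n a (j - x), sub_neg_eq_add, sub_zero]

lemma modCount_eq_sum_endCount (ha : 0 < a) (K : Finset ℤ)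
    (hK : ∀ k, |j + k * a| ≤ n → k ∈ K) :
    modCount n a j = ∑ k ∈ K, endCount n (j + k * a) := by
  have hquot {w : Fin n → Step} (hw : psum w n ≡ j [ZMOD a]) :
      j + (psum w n - j) / a * a = psum w n := by
    rw [Int.ediv_mul_cancel hw.symm.dvd, add_sub_cancel]
  rw [modCount, numPaths_eq_sum_fiberwise (fun w => (psum w n - j) / a) K
    fun w hw => hK _ ((hquot hw).symm ▸ abs_psum_le w)]
  refine sum_congr rfl fun k _ => numPaths_congr fun w =>
    ⟨fun ⟨hw, hk⟩ => hk ▸ (hquot hw).symm, fun hw => ?_⟩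
  rw [hw, add_sub_cancel_left, Int.mul_ediv_cancel k ha.ne']
  exact ⟨Int.add_mul_emod_self_right j k a, rfl⟩

lemma reflCount_succ :
    reflCount (n + 1) a j = reflCount n a (j - 1) + reflCount n a (j + 1) + reflCount n a j := by
  simp only [reflCount, modCount_succ]
  rw [show -2 - (j - 1) = -2 - j + 1 by ring, show -2 - (j + 1) = -2 - j - 1 by ring]
  ring

lemma reflCount_eq_neg (h : a ∣ j + j' + 2) : reflCount n a j' = -reflCount n a j := by
  have hj' : j' ≡ -2 - j [ZMOD a] :=
    Int.modEq_iff_dvd.2 (by rw [show -2 - j - j' = -(j + j' + 2) by ring]; exact h.neg_right)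
  have hj : -2 - j' ≡ j [ZMOD a] :=
    Int.modEq_iff_dvd.2 (by rw [show j - (-2 - j') = j + j' + 2 by ring]; exact h)
  rw [reflCount, reflCount, modCount_congr hj', modCount_congr hj]
  ring

lemma reflCount_eq_zero (h : a ∣ 2 * j + 2) : reflCount n a j = 0 := by
  have := reflCount_eq_neg (n := n) (j' := j) (by convert h using 1; ring)
  omega

lemma reflCount_zero (h0 : 0 ≤ j) (hja : j + 2 < a) :
    reflCount 0 a j = if j = 0 then 1 else 0 := by
  have hj : 0 ≡ j [ZMOD a] ↔ j = 0 := by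
    rw [Int.modEq_iff_dvd, sub_zero]
    exact ⟨fun hd => Int.eq_zero_of_dvd_of_nonneg_of_lt h0 (by omega) hd,
      fun hj => hj ▸ dvd_zero a⟩
  have hrefl : ¬ 0 ≡ -2 - j [ZMOD a] := by
    rw [Int.modEq_iff_dvd, sub_zero, show -2 - j = -(j + 2) by ring, dvd_neg]
    exact fun hd => by have := Int.eq_zero_of_dvd_of_nonneg_of_lt (by omega) hja hd; omega
  rw [reflCount, modCount_zero, modCount_zero, if_neg hrefl, sub_zero]
  exact if_congr hj rfl rfl

end Count

theorem stripCount_eq_reflCount (H : ℤ) (n : ℕ) :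
    ∀ j, -1 ≤ j → j ≤ H + 1 → stripCount n H j = reflCount n (2 * H + 4) j := by
  have hwall (m : ℕ) (j : ℤ) (hj : j = -1 ∨ j = H + 1) :
      stripCount m H j = reflCount m (2 * H + 4) j := by
    rw [stripCount_eq_zero (by omega), reflCount_eq_zero]
    rcases hj with rfl | rfl
    exacts [⟨0, by ring⟩, ⟨1, by ring⟩]
  induction n with
  | zero =>
    intro j hlo hhi
    obtain hj | ⟨h0, hjH⟩ : (j = -1 ∨ j = H + 1) ∨ (0 ≤ j ∧ j ≤ H) := by omega
    · exact hwall 0 j hj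
    rw [stripCount_zero (h0.trans hjH), reflCount_zero h0 (by omega)]
  | succ n ih =>
    intro j hlo hhi
    obtain hj | ⟨h0, hjH⟩ : (j = -1 ∨ j = H + 1) ∨ (0 ≤ j ∧ j ≤ H) := by omega
    · exact hwall (n + 1) j hj
    rw [stripCount_succ h0 hjH, reflCount_succ, ih (j - 1) (by omega) (by omega),
      ih (j + 1) (by omega) (by omega), ih j (by omega) (by omega)]

theorem stripCountNoFlatTop_eq_reflCount (H : ℤ) (n : ℕ) :
    ∀ j, -1 ≤ j → j ≤ H → stripCountNoFlatTop n H j = reflCount n (2 * H + 3) j := by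
  induction n with
  | zero =>
    intro j hlo hhi
    obtain rfl | h0 : j = -1 ∨ 0 ≤ j := by omega
    · rw [stripCountNoFlatTop_eq_zero (by omega), reflCount_eq_zero (by simp)]
    · rw [stripCountNoFlatTop_zero (h0.trans hhi), reflCount_zero h0 (by omega)]
  | succ n ih =>
    intro j hlo hhi
    obtain rfl | h0 : j = -1 ∨ 0 ≤ j := by omega
    · rw [stripCountNoFlatTop_eq_zero (by omega), reflCount_eq_zero (by simp)]
    rw [stripCountNoFlatTop_succ h0 hhi, reflCount_succ, ih (j - 1) (by omega) (by omega)]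
    split_ifs with htop
    · subst htop
      rw [stripCountNoFlatTop_eq_zero (by omega), reflCount_eq_neg (j' := j + 1) ⟨1, by ring⟩]
      ring
    · rw [ih (j + 1) (by omega) (by omega), ih j (by omega) (by omega)]

lemma T_of_neg {n : ℕ} {m : ℤ} (hm : m < 0) : T n m = 0 :=
  if_neg hm.not_ge

open Polynomial in
lemma T_succ (n : ℕ) (m : ℤ) : T (n + 1) m = T n m + T n (m - 1) + T n (m - 2) := by
  rcases lt_or_ge m 0 with hm | hm
  · rw [T_of_neg hm, T_of_neg hm, T_of_neg (by omega), T_of_neg (by omega), add_zero, add_zero]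
  have hshift (i : ℕ) : ((1 + X + X ^ 2) ^ n * X ^ i : ℤ[X]).coeff m.toNat = T n (m - i) := by
    rw [coeff_mul_X_pow', T]
    split_ifs <;> first | rfl | omega | (congr 1; omega)
  rw [T, if_pos hm, pow_succ,
    show ((1 + X + X ^ 2) ^ n * (1 + X + X ^ 2) : ℤ[X]) =
      (1 + X + X ^ 2) ^ n * X ^ 0 + (1 + X + X ^ 2) ^ n * X ^ 1 + (1 + X + X ^ 2) ^ n * X ^ 2 by
      ring,
    coeff_add, coeff_add, hshift, hshift, hshift, Nat.cast_zero, sub_zero, Nat.cast_one,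
    Nat.cast_two]

lemma T_eq_endCount (n : ℕ) (m : ℤ) : T n m = endCount n (m - n) := by
  induction n generalizing m with
  | zero =>
    rw [endCount_zero, Nat.cast_zero, sub_zero]
    rcases lt_or_ge m 0 with hm | hm
    · rw [T_of_neg hm, if_neg hm.ne]
    · rw [T, if_pos hm, pow_zero, Polynomial.coeff_one]
      exact if_congr (by omega) rfl rfl
  | succ n ih =>
    rw [T_succ, endCount_succ, ih, ih, ih]
    push_cast
    ring_nf

lemma sum_Icc_neg_eq {M : Type*} [AddCommGroup M] (f : ℤ → M) (N : ℕ) :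
    ∑ k ∈ Icc (-(N : ℤ)) N, f k = f 0 + ∑ k ∈ Icc 1 N, (f k + f (-k)) := by
  induction N with
  | zero => simp
  | succ N ih =>
    rw [Nat.cast_succ, sum_Icc_succ_eq_add_endpoints, ih, sum_Icc_succ_top (by omega)]
    push_cast
    abel

lemma modCount_eq_endCount_add {n : ℕ} {a j : ℤ} (ha : 1 ≤ a) (hj : |j| ≤ 2) :
    modCount n a j = endCount n j +
      ∑ k ∈ Icc 1 (n + 2), (endCount n (j + k * a) + endCount n (j - k * a)) := by
  rw [modCount_eq_sum_endCount (by omega) (Icc (-((n + 2 : ℕ) : ℤ)) (n + 2 : ℕ)),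
    sum_Icc_neg_eq]
  · simp [sub_eq_add_neg]
  · intro k hk
    rw [abs_le] at hk hj
    rw [mem_Icc]
    constructor <;> rcases le_or_gt 0 k with hk0 | hk0 <;> push_cast <;> nlinarith

lemma S_eq_reflCount (n : ℕ) {a : ℕ} (ha : 0 < a) :
    S n a = endCount n 0 - endCount n (-2) - reflCount n a 0 := by
  have hterm (k : ℕ) :
      T n (n + 2 - k * a) - 2 * T n (n - k * a) + T n (n - 2 - k * a) =
        (endCount n (-2 + k * a) + endCount n (-2 - k * a)) -
          (endCount n (0 + k * a) + endCount n (0 - k * a)) := by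
    rw [T_eq_endCount, T_eq_endCount, T_eq_endCount, ← endCount_neg (j := -2 + k * a),
      ← endCount_neg (j := 0 + k * a)]
    ring_nf
  rw [S, reflCount, modCount_eq_endCount_add (by omega) (by norm_num),
    modCount_eq_endCount_add (by omega) (by norm_num), sum_congr rfl fun k _ => hterm k,
    sum_sub_distrib, sub_zero]
  ring

/-- The number of Motzkin paths of length `n` with height exactly `h` having no
horizontal step at level `h` is `S n (2h+2) - S n (2h+3)`. -/
theorem no_horiz_count_trinomial (n h : ℕ) :
    ((Finset.univ.filter fun w : Fin n → Step =>
      IsMotzkin w ∧ height w = (h : ℤ) ∧ ¬ HasHorizAt w (h : ℤ)).card : ℤ)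
      = S n (2 * h + 2) - S n (2 * h + 3) := by
  rw [← numPaths_eq_card, numPaths_isMotzkin_height_eq,
    stripCountNoFlatTop_eq_reflCount _ n 0 (by omega) (by omega),
    stripCount_eq_reflCount _ n 0 (by omega) (by omega), S_eq_reflCount n (by omega),
    S_eq_reflCount n (by omega)]
  push_cast
  ring_nf
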